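/- Let d ≥ 3 be an integer, a_c = (d−2)/2, and let (a,b) ∈ ℝ² satisfy a ≤ b < a+1 and a < a_c. Set n = d/(1+a−b) and α = (a_c−a)(a+1−b)/(a_c−a+b), so α > 0 and n ≥ d > 2. Let λ > 0 and μ ∈ ℝ with λ² − μ² = 1, set f(x) = λ + μ tanh(α ln|x|), and define v = f^{−(n−2)/2} on ℝ^d∖{0}. Then, with L̄v(x) = |x|^{2(1−α)} ((1+|x|^{2α})²/4) [ Δv(x) − (2a/|x|²) x·∇v(x) − (n−2)(2α|x|^{2α−2}/(1+|x|^{2α})) x·∇v(x) ], the function v satisfies the Yamabe-type equation −(4/(n(n−2)α²)) L̄v + v = v^{(n+2)/(n−2)} pointwise on ℝ^d∖{0}. -/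

import Mathlib

/-!
Write `τ = α log |x|`. Since `|x| ^ (2α) = exp (2τ)`, the conformal factor
`|x| ^ (2(1-α)) (1 + |x| ^ (2α))² / 4` equals `|x|² cosh² τ`, and
`2|x|^(2α) / (1 + |x|^(2α))` equals `1 + tanh τ`. For a function of `τ` alone the Euclidean
Laplacian is `α² |x|⁻² (∂_τ² + ((d - 2) / α) ∂_τ)`, and the parameters are tuned so that
`d - 2 - 2a = α (n - 2)`; hence `L̄` acts on functions of `τ` as
`α² cosh² τ (∂_τ² - (n - 2) tanh τ ∂_τ)`. The equation thus reduces to an ODE for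
`F = (λ + μ tanh τ) ^ (-(n-2)/2)`, which follows from `tanh' = 1 - tanh²` and `λ² - μ² = 1`.
-/

open Real
open scoped RealInnerProductSpace

/-- The Euclidean Laplacian of a function on `EuclideanSpace ℝ (Fin d)`. -/
noncomputable def euclideanLaplacian {d : ℕ} (u : EuclideanSpace ℝ (Fin d) → ℝ)
    (x : EuclideanSpace ℝ (Fin d)) : ℝ :=
  ∑ i : Fin d, fderiv ℝ (fun y => fderiv ℝ u y (EuclideanSpace.single i 1)) x
    (EuclideanSpace.single i 1)

theorem Real.tanh_fun_eq_sinh_div_cosh : tanh = sinh / cosh := funext tanh_eq_sinh_div_cosh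

theorem Real.hasDerivAt_tanh (x : ℝ) : HasDerivAt tanh (1 - tanh x ^ 2) x := by
  rw [tanh_fun_eq_sinh_div_cosh]
  refine ((hasDerivAt_sinh x).div (hasDerivAt_cosh x) (cosh_pos x).ne').congr_deriv ?_
  rw [Pi.div_apply]
  field_simp

theorem Real.contDiff_tanh {k : WithTop ℕ∞} : ContDiff ℝ k tanh := by
  rw [tanh_fun_eq_sinh_div_cosh]
  exact contDiff_sinh.div contDiff_cosh fun y => (cosh_pos y).ne'

section TanhProfile

variable {lam mu : ℝ}

theorem add_mul_tanh_pos (hlam : 0 < lam) (hnorm : lam ^ 2 - mu ^ 2 = 1) (t : ℝ) :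
    0 < lam + mu * tanh t := by
  have hT := abs_tanh_lt_one t
  have hmu : |mu| < lam := abs_lt_of_sq_lt_sq (by linarith) hlam.le
  calc 0 < lam - |mu| * 1 := by linarith
    _ ≤ lam - |mu * tanh t| := by rw [abs_mul]; gcongr
    _ ≤ lam + mu * tanh t := by linarith [neg_abs_le (mu * tanh t)]

theorem contDiff_rpow_add_mul_tanh (hlam : 0 < lam) (hnorm : lam ^ 2 - mu ^ 2 = 1) (c : ℝ)
    {k : WithTop ℕ∞} : ContDiff ℝ k fun t => (lam + mu * tanh t) ^ c :=
  (contDiff_const.add (contDiff_const.mul contDiff_tanh)).rpow_const_of_ne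
    fun t => (add_mul_tanh_pos hlam hnorm t).ne'

theorem hasDerivAt_rpow_add_mul_tanh (c : ℝ) {t : ℝ} (hf : 0 < lam + mu * tanh t) :
    HasDerivAt (fun t => (lam + mu * tanh t) ^ c)
      (c * mu * (1 - tanh t ^ 2) * (lam + mu * tanh t) ^ (c - 1)) t := by
  refine ((((hasDerivAt_tanh t).const_mul mu).const_add lam).rpow_const
    (Or.inl hf.ne')).congr_deriv ?_
  ring

theorem tanh_profile_ode (hlam : 0 < lam) (hnorm : lam ^ 2 - mu ^ 2 = 1) {n : ℝ} (hn : n ≠ 0)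
    (hn2 : n ≠ 2) {F' : ℝ → ℝ} {F'' τ : ℝ}
    (hF : ∀ t, HasDerivAt (fun t => (lam + mu * tanh t) ^ (-((n - 2) / 2))) (F' t) t)
    (hF' : HasDerivAt F' F'' τ) :
    -(4 / (n * (n - 2))) * (cosh τ ^ 2 * (F'' - (n - 2) * tanh τ * F' τ))
        + (lam + mu * tanh τ) ^ (-((n - 2) / 2))
      = ((lam + mu * tanh τ) ^ (-((n - 2) / 2))) ^ ((n + 2) / (n - 2)) := by
  set c := -((n - 2) / 2) with hc
  have hf := add_mul_tanh_pos hlam hnorm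
  have hF'_eq : F' = fun t => c * mu * (1 - tanh t ^ 2) * (lam + mu * tanh t) ^ (c - 1) :=
    funext fun t => (hF t).unique (hasDerivAt_rpow_add_mul_tanh c (hf t))
  have hF''_eq : F'' = c * mu * (1 - tanh τ ^ 2) *
      ((c - 1) * mu * (1 - tanh τ ^ 2) * (lam + mu * tanh τ) ^ (c - 2)
        - 2 * tanh τ * (lam + mu * tanh τ) ^ (c - 1)) := by
    have hsech : HasDerivAt (fun t => 1 - tanh t ^ 2) (-(2 * tanh τ * (1 - tanh τ ^ 2))) τ := by
      refine (((hasDerivAt_tanh τ).pow 2).const_sub 1).congr_deriv ?_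
      ring
    rw [hF'_eq] at hF'
    refine hF'.unique (((hsech.const_mul (c * mu)).mul
      (hasDerivAt_rpow_add_mul_tanh (c - 1) (hf τ))).congr_deriv ?_)
    rw [show c - 1 - 1 = c - 2 by ring]
    ring
  have hc1 :
      (lam + mu * tanh τ) ^ (c - 1) = (lam + mu * tanh τ) ^ (c - 2) * (lam + mu * tanh τ) := by
    rw [← rpow_add_one (hf τ).ne']
    ring_nf
  have hc0 :
      (lam + mu * tanh τ) ^ c = (lam + mu * tanh τ) ^ (c - 2) * (lam + mu * tanh τ) ^ 2 := by
    rw [← rpow_add_natCast (hf τ).ne']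
    push_cast
    ring_nf
  have hcosh : cosh τ ^ 2 * (1 - tanh τ ^ 2) = 1 := by
    rw [tanh_eq_sinh_div_cosh]
    field_simp [(cosh_pos τ).ne']
    linear_combination cosh_sq τ
  rw [hF''_eq, hF'_eq]
  beta_reduce
  rw [← rpow_mul (hf τ).le,
    show c * ((n + 2) / (n - 2)) = c - 2 by field_simp [sub_ne_zero.2 hn2]; ring, hc1, hc0]
  generalize (lam + mu * tanh τ) ^ (c - 2) = P
  generalize tanh τ = T at hcosh ⊢
  rw [hc]
  field_simp [sub_ne_zero.2 hn2]
  linear_combination (-4 * mu * P * (n * mu * (1 - T ^ 2) + 2 * n * T * (lam + mu * T))) * hcosh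
    + 4 * n * P * hnorm

end TanhProfile

section NormSq

variable {E : Type*} [NormedAddCommGroup E] [InnerProductSpace ℝ E] {g : ℝ → ℝ} {g' : ℝ} {x : E}

theorem HasDerivAt.hasFDerivAt_comp_norm_sq (hg : HasDerivAt g g' (‖x‖ ^ 2)) :
    HasFDerivAt (fun y => g (‖y‖ ^ 2)) ((2 * g') • innerSL ℝ x) x := by
  refine (hg.comp_hasFDerivAt x (hasStrictFDerivAt_norm_sq x).hasFDerivAt).congr_fderiv ?_
  ext y
  simp
  ring

theorem inner_gradient_comp_norm_sq [CompleteSpace E] (hg : HasDerivAt g g' (‖x‖ ^ 2)) :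
    ⟪x, gradient (fun y => g (‖y‖ ^ 2)) x⟫ = 2 * ‖x‖ ^ 2 * g' := by
  have h : HasGradientAt (fun y => g (‖y‖ ^ 2)) ((2 * g') • x) x := by
    rw [hasGradientAt_iff_hasFDerivAt]
    refine hg.hasFDerivAt_comp_norm_sq.congr_fderiv ?_
    ext y
    simp
  rw [h.gradient, real_inner_smul_right, real_inner_self_eq_norm_sq]
  ring

end NormSq

open Filter Topology in
theorem euclideanLaplacian_comp_norm_sq {d : ℕ} {g g' : ℝ → ℝ} {g'' : ℝ}
    {x : EuclideanSpace ℝ (Fin d)} (hg : ∀ᶠ t in 𝓝 (‖x‖ ^ 2), HasDerivAt g (g' t) t)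
    (hg' : HasDerivAt g' g'' (‖x‖ ^ 2)) :
    euclideanLaplacian (fun y => g (‖y‖ ^ 2)) x = 2 * d * g' (‖x‖ ^ 2) + 4 * ‖x‖ ^ 2 * g'' := by
  have hnear : ∀ᶠ y in 𝓝 x, HasDerivAt g (g' (‖y‖ ^ 2)) (‖y‖ ^ 2) :=
    (continuous_norm.pow 2).continuousAt.eventually hg
  have hpartial (i : Fin d) :
      fderiv ℝ (fun y => fderiv ℝ (fun y => g (‖y‖ ^ 2)) y (EuclideanSpace.single i 1)) x
        (EuclideanSpace.single i 1) = 2 * g' (‖x‖ ^ 2) + 4 * g'' * x i ^ 2 := by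
    have hev : (fun y => fderiv ℝ (fun y => g (‖y‖ ^ 2)) y (EuclideanSpace.single i 1))
        =ᶠ[𝓝 x] fun y => 2 * g' (‖y‖ ^ 2) * EuclideanSpace.proj i y := by
      filter_upwards [hnear] with y hy
      rw [hy.hasFDerivAt_comp_norm_sq.fderiv]
      simp [EuclideanSpace.inner_single_right]
    have hD : HasFDerivAt (fun y => 2 * g' (‖y‖ ^ 2) * EuclideanSpace.proj i y) _ x :=
      (hg'.hasFDerivAt_comp_norm_sq.const_mul 2).mul (EuclideanSpace.proj (𝕜 := ℝ) i).hasFDerivAt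
    rw [hev.fderiv_eq, hD.fderiv]
    simp [EuclideanSpace.inner_single_right]
    ring
  simp only [euclideanLaplacian, hpartial, Finset.sum_add_distrib, ← Finset.mul_sum,
    ← EuclideanSpace.real_norm_sq_eq]
  simp
  ring

theorem hasDerivAt_comp_const_mul_log {f : ℝ → ℝ} {f' k s : ℝ} (hs : s ≠ 0)
    (hf : HasDerivAt f f' (k * log s)) : HasDerivAt (fun s => f (k * log s)) (k / s * f') s := by
  refine (hf.comp s ((hasDerivAt_log hs).const_mul k)).congr_deriv ?_
  field_simp

theorem half_mul_log_sq (α r : ℝ) : α / 2 * log (r ^ 2) = α * log r := by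
  rw [log_pow]
  push_cast
  ring

theorem comp_log_norm_eq {E : Type*} [NormedAddCommGroup E] (F : ℝ → ℝ) (α : ℝ) :
    (fun y : E => F (α * log ‖y‖)) = fun y => F (α / 2 * log (‖y‖ ^ 2)) := by
  simp only [half_mul_log_sq]

section LogNorm

variable {F : ℝ → ℝ} {α : ℝ}

theorem inner_gradient_comp_log_norm {E : Type*} [NormedAddCommGroup E] [InnerProductSpace ℝ E]
    [CompleteSpace E] {F' : ℝ} {x : E} (hx : x ≠ 0) (hF : HasDerivAt F F' (α * log ‖x‖)) :
    ⟪x, gradient (fun y => F (α * log ‖y‖)) x⟫ = α * F' := by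
  have hx2 : ‖x‖ ^ 2 ≠ 0 := by positivity
  rw [comp_log_norm_eq, inner_gradient_comp_norm_sq (g := fun s => F (α / 2 * log s))
    (g' := α / 2 / ‖x‖ ^ 2 * F')]
  · field_simp
  · refine hasDerivAt_comp_const_mul_log hx2 ?_
    rwa [half_mul_log_sq]

theorem euclideanLaplacian_comp_log_norm {d : ℕ} {F' : ℝ → ℝ} {F'' : ℝ}
    {x : EuclideanSpace ℝ (Fin d)} (hx : x ≠ 0) (hF : ∀ t, HasDerivAt F (F' t) t)
    (hF' : HasDerivAt F' F'' (α * log ‖x‖)) :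
    euclideanLaplacian (fun y => F (α * log ‖y‖)) x
      = α / ‖x‖ ^ 2 * (α * F'' + (d - 2) * F' (α * log ‖x‖)) := by
  have hx2 : ‖x‖ ^ 2 ≠ 0 := by positivity
  have hg' : HasDerivAt (fun s => α / 2 / s * F' (α / 2 * log s))
      (-(α / 2) / (‖x‖ ^ 2) ^ 2 * F' (α * log ‖x‖) + α / 2 / ‖x‖ ^ 2 * (α / 2 / ‖x‖ ^ 2 * F''))
      (‖x‖ ^ 2) := by
    have hinv : HasDerivAt (fun s => α / 2 / s) (-(α / 2) / (‖x‖ ^ 2) ^ 2) (‖x‖ ^ 2) := by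
      simpa [div_eq_mul_inv] using (hasDerivAt_inv hx2).const_mul (α / 2)
    refine (hinv.fun_mul (hasDerivAt_comp_const_mul_log (f' := F'') hx2 ?_)).congr_deriv ?_
    · rwa [half_mul_log_sq]
    · rw [half_mul_log_sq]
  rw [comp_log_norm_eq,
    euclideanLaplacian_comp_norm_sq (g := fun s => F (α / 2 * log s)) _ hg', half_mul_log_sq]
  · field_simp
    ring
  · filter_upwards [eventually_ne_nhds hx2] with s hs
    exact hasDerivAt_comp_const_mul_log hs (hF _)

end LogNorm

theorem ckn_exponents {D a b n α : ℝ} (hD : 2 < D) (hab : a ≤ b) (hba : b < a + 1)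
    (ha : a < (D - 2) / 2) (hn : n = D / (1 + a - b))
    (hα : α = ((D - 2) / 2 - a) * (a + 1 - b) / ((D - 2) / 2 - a + b)) :
    0 < α ∧ 2 < n ∧ α * (n - 2) = D - 2 - 2 * a := by
  have hgap : 0 < 1 + a - b := by linarith
  have hden : 0 < (D - 2) / 2 - a + b := by linarith
  refine ⟨?_, ?_, ?_⟩
  · rw [hα]
    exact div_pos (mul_pos (by linarith) (by linarith)) hden
  · rw [hn, lt_div_iff₀ hgap]
    nlinarith
  · have hden' : D - 2 - 2 * a + 2 * b ≠ 0 := by linarith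
    rw [hα, hn]
    field_simp
    ring

theorem ckn_operator_log_coords {α a n D r F' F'' : ℝ} (hr : 0 < r)
    (hkey : α * (n - 2) = D - 2 - 2 * a) :
    r ^ (2 * (1 - α)) * ((1 + r ^ (2 * α)) ^ 2 / 4) *
        (α / r ^ 2 * (α * F'' + (D - 2) * F') - 2 * a / r ^ 2 * (α * F')
          - (n - 2) * (2 * α * r ^ (2 * α - 2) / (1 + r ^ (2 * α))) * (α * F'))
      = α ^ 2 * (cosh (α * log r) ^ 2 * (F'' - (n - 2) * tanh (α * log r) * F')) := by
  obtain rfl : D = α * (n - 2) + 2 + 2 * a := by linarith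
  have hexp : exp (α * log r) = r ^ α := by rw [rpow_def_of_pos hr, mul_comm]
  have h2α : r ^ (2 * α) = (r ^ α) ^ 2 := by
    rw [mul_comm, rpow_mul hr.le, rpow_two]
  have h2 : r ^ (2 * (1 - α)) = r ^ 2 / (r ^ α) ^ 2 := by
    rw [← h2α, ← rpow_two, ← rpow_sub hr]
    ring_nf
  have h3 : r ^ (2 * α - 2) = (r ^ α) ^ 2 / r ^ 2 := by
    rw [← h2α, ← rpow_two, ← rpow_sub hr]
  rw [cosh_eq, tanh_eq, exp_neg, hexp, h2, h3, h2α]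
  field_simp
  ring

/-- The extremal function v = (λ + μ tanh(α ln|x|))^{-(n-2)/2} satisfies the
Yamabe-type equation -(4/(n(n-2)α²)) L̄v + v = v^{(n+2)/(n-2)} on the spherical
CKN space. -/
theorem spherical_ckn_yamabe (d : ℕ) (hd : 3 ≤ d) (a b n α lam mu : ℝ)
    (hab : a ≤ b) (hba : b < a + 1) (ha : a < ((d : ℝ) - 2) / 2)
    (hn : n = (d : ℝ) / (1 + a - b))
    (hα : α = (((d : ℝ) - 2) / 2 - a) * (a + 1 - b) / (((d : ℝ) - 2) / 2 - a + b))
    (hlam : 0 < lam) (hnorm : lam ^ 2 - mu ^ 2 = 1)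
    (v : EuclideanSpace ℝ (Fin d) → ℝ)
    (hv : ∀ x, v x =
      (lam + mu * Real.tanh (α * Real.log ‖x‖)) ^ (-((n - 2) / 2))) :
    ∀ x : EuclideanSpace ℝ (Fin d), x ≠ 0 →
      -(4 / (n * (n - 2) * α ^ 2)) *
          (‖x‖ ^ (2 * (1 - α)) * ((1 + ‖x‖ ^ (2 * α)) ^ 2 / 4) *
            (euclideanLaplacian v x - 2 * a / ‖x‖ ^ 2 * ⟪x, gradient v x⟫
              - (n - 2) * (2 * α * ‖x‖ ^ (2 * α - 2) / (1 + ‖x‖ ^ (2 * α))) *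
                ⟪x, gradient v x⟫))
        + v x =
      v x ^ ((n + 2) / (n - 2)) := by
  intro x hx
  obtain ⟨hα0, hn2, hkey⟩ := ckn_exponents (by exact_mod_cast hd) hab hba ha hn hα
  set F : ℝ → ℝ := fun t => (lam + mu * tanh t) ^ (-((n - 2) / 2))
  have hvF : v = fun y => F (α * log ‖y‖) := funext hv
  have hF : ContDiff ℝ 2 F := contDiff_rpow_add_mul_tanh hlam hnorm _
  have hF1 (t : ℝ) : HasDerivAt F (deriv F t) t := (hF.differentiable two_ne_zero t).hasDerivAt
  have hF2 (t : ℝ) : HasDerivAt (deriv F) (deriv (deriv F) t) t :=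
    ((contDiff_succ_iff_deriv.mp hF).2.2.differentiable one_ne_zero t).hasDerivAt
  rw [hvF, euclideanLaplacian_comp_log_norm hx hF1 (hF2 _),
    inner_gradient_comp_log_norm hx (hF1 _), ckn_operator_log_coords (norm_pos_iff.2 hx) hkey]
  convert tanh_profile_ode hlam hnorm (zero_lt_two.trans hn2).ne' hn2.ne' hF1 (hF2 _) using 2
  field_simp [hα0.ne']
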